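/- Let Λ be a connected simple graph with finite nonempty vertex set V of cardinality N, and let G be a finite group. Then the number of flat G-valued gauge fields on Λ equals |G|^{N−1}. -/
import Mathlib

def IsGaugeField {V : Type*} {G : Type*} [Group G] {Λ : SimpleGraph V}
    (φ : Λ.Dart → G) : Prop :=
  ∀ d : Λ.Dart, φ d.symm = (φ d)⁻¹

def holonomy {V : Type*} {G : Type*} [Group G] {Λ : SimpleGraph V}
    (φ : Λ.Dart → G) {u v : V} (p : Λ.Walk u v) : G :=
  (p.darts.map φ).prod

def IsFlat {V : Type*} {G : Type*} [Group G] {Λ : SimpleGraph V}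
    (φ : Λ.Dart → G) : Prop :=
  ∀ (u : V) (p : Λ.Walk u u), holonomy φ p = 1

section Aux
open SimpleGraph
variable {V : Type*} {G : Type*} [Group G] {Λ : SimpleGraph V}

lemma holonomy_nil (φ : Λ.Dart → G) {u : V} : holonomy φ (Walk.nil : Λ.Walk u u) = 1 := rfl

lemma holonomy_cons (φ : Λ.Dart → G) {u v w : V} (h : Λ.Adj u v) (p : Λ.Walk v w) :
    holonomy φ (Walk.cons h p) = φ ⟨(u, v), h⟩ * holonomy φ p := by
  simp [holonomy]

lemma holonomy_append (φ : Λ.Dart → G) {u v w : V} (p : Λ.Walk u v) (q : Λ.Walk v w) :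
    holonomy φ (p.append q) = holonomy φ p * holonomy φ q := by
  induction p with
  | nil => simp [holonomy_nil]
  | cons h p ih => simp [Walk.cons_append, holonomy_cons, ih, mul_assoc]

lemma holonomy_reverse {φ : Λ.Dart → G} (hφ : IsGaugeField φ) {u v : V} (p : Λ.Walk u v) :
    holonomy φ p.reverse = (holonomy φ p)⁻¹ := by
  induction p with
  | nil => simp [holonomy_nil]
  | cons h p ih =>
    rw [Walk.reverse_cons, holonomy_append, ih, holonomy_cons, holonomy_cons, holonomy_nil,
      mul_one, mul_inv_rev]
    congr 1
    exact hφ ⟨(_, _), h⟩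

lemma holonomy_eq_of_flat {φ : Λ.Dart → G} (hφ : IsGaugeField φ) (hf : IsFlat φ)
    {u v : V} (p q : Λ.Walk u v) : holonomy φ p = holonomy φ q := by
  have := hf u (p.append q.reverse)
  rw [holonomy_append, holonomy_reverse hφ] at this
  rwa [mul_inv_eq_one] at this

end Aux

open SimpleGraph in
/-- On a connected simple graph with finite nonempty vertex set of
cardinality `N`, the number of flat `G`-valued gauge fields equals `|G| ^ (N − 1)` for any
finite group `G`. -/
theorem card_flat_gauge_fields {V : Type*} {G : Type*} [Group G] [Finite G]
    [Fintype V] (N : ℕ) (hN : Fintype.card V = N)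
    (Λ : SimpleGraph V) (hΛ : Λ.Connected) :
    Nat.card {φ : Λ.Dart → G // IsGaugeField φ ∧ IsFlat φ} = Nat.card G ^ (N - 1) := by
  classical
  obtain ⟨v₀⟩ := hΛ.nonempty
  have hw : ∀ v : V, Λ.Walk v₀ v := fun v => (hΛ.preconnected v₀ v).some
  -- equivalence with pointed functions
  have e1 : {φ : Λ.Dart → G // IsGaugeField φ ∧ IsFlat φ} ≃ {f : V → G // f v₀ = 1} :=
    { toFun := fun φ => ⟨fun v => holonomy φ.1 (hw v), by
        show holonomy φ.1 (hw v₀) = 1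
        rw [holonomy_eq_of_flat φ.2.1 φ.2.2 (hw v₀) Walk.nil]
        rfl⟩
      invFun := fun f => ⟨fun d => (f.1 d.fst)⁻¹ * f.1 d.snd, by
        constructor
        · intro d
          simp [IsGaugeField]
        · intro u p
          have key : ∀ {a b : V} (p : Λ.Walk a b),
              holonomy (fun d : Λ.Dart => (f.1 d.fst)⁻¹ * f.1 d.snd) p = (f.1 a)⁻¹ * f.1 b := by
            intro a b p
            induction p with
            | nil => simp [holonomy_nil]
            | cons h p ih => rw [holonomy_cons, ih]; group
          rw [key p]; group⟩
      left_inv := by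
        rintro ⟨φ, hg, hf⟩
        ext d
        have : holonomy φ (hw d.snd) = holonomy φ ((hw d.fst).append (Walk.cons d.adj Walk.nil)) :=
          holonomy_eq_of_flat hg hf _ _
        simp only [this, holonomy_append, holonomy_cons, holonomy_nil, mul_one,
          inv_mul_cancel_left]
      right_inv := by
        rintro ⟨f, hf⟩
        ext v
        have key : ∀ {a b : V} (p : Λ.Walk a b),
            holonomy (fun d : Λ.Dart => (f d.fst)⁻¹ * f d.snd) p = (f a)⁻¹ * f b := by
          intro a b p
          induction p with
          | nil => simp [holonomy_nil]
          | cons h p ih => rw [holonomy_cons, ih]; group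
        simp [key (hw v), hf] }
  have e2 : {f : V → G // f v₀ = 1} ≃ ({v : V // v ≠ v₀} → G) :=
    { toFun := fun f v => f.1 v.1
      invFun := fun g => ⟨fun v => if h : v = v₀ then 1 else g ⟨v, h⟩, by simp⟩
      left_inv := by
        rintro ⟨f, hf⟩
        ext v
        by_cases h : v = v₀ <;> simp [h, hf]
      right_inv := by
        intro g
        ext v
        simp [v.2] }
  rw [Nat.card_congr (e1.trans e2), Nat.card_fun]
  congr 1
  rw [Nat.card_eq_fintype_card, Fintype.card_subtype_compl, Fintype.card_subtype_eq, hN]
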